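/- Let f(α,β,γ) = (π·sin α/S, π·sin β/S, π·sin γ/S) with S = sin α + sin β + sin γ, defined on triples of positive reals summing to π. For any such triple p, the sequence of iterates fⁿ(p) converges to (π/3, π/3, π/3). -/

import Mathlib

open Real

noncomputable def f (p : ℝ × ℝ × ℝ) : ℝ × ℝ × ℝ :=
  (π * Real.sin p.1 / (Real.sin p.1 + Real.sin p.2.1 + Real.sin p.2.2),
   π * Real.sin p.2.1 / (Real.sin p.1 + Real.sin p.2.1 + Real.sin p.2.2),
   π * Real.sin p.2.2 / (Real.sin p.1 + Real.sin p.2.1 + Real.sin p.2.2))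

/-! ### Auxiliary lemmas -/

lemma chord {x y : ℝ} (hx : 0 < x) (hxy : x ≤ y) (hy : y ≤ π) :
    x * Real.sin y ≤ y * Real.sin x := by
  have hy0 : 0 < y := hx.trans_le hxy
  have h := strictConcaveOn_sin_Icc.concaveOn.2
    (show (0:ℝ) ∈ Set.Icc 0 π from ⟨le_refl _, pi_pos.le⟩)
    (show y ∈ Set.Icc 0 π from ⟨hy0.le, hy⟩)
    (show (0:ℝ) ≤ 1 - x/y from by rw [sub_nonneg]; exact (div_le_one hy0).2 hxy)
    (show (0:ℝ) ≤ x/y from by positivity)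
    (show (1 - x/y) + x/y = 1 from by ring)
  simp only [smul_eq_mul, mul_zero, Real.sin_zero, zero_add] at h
  rw [div_mul_cancel₀ x hy0.ne'] at h
  calc x * Real.sin y = y * (x/y * Real.sin y) := by field_simp
    _ ≤ y * Real.sin x := mul_le_mul_of_nonneg_left h hy0.le

lemma chord_strict {x y : ℝ} (hx : 0 < x) (hxy : x < y) (hy : y ≤ π) :
    x * Real.sin y < y * Real.sin x := by
  have hy0 : 0 < y := hx.trans hxy
  have h := strictConcaveOn_sin_Icc.2
    (show (0:ℝ) ∈ Set.Icc 0 π from ⟨le_refl _, pi_pos.le⟩)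
    (show y ∈ Set.Icc 0 π from ⟨hy0.le, hy⟩)
    (show (0:ℝ) ≠ y from hy0.ne)
    (show (0:ℝ) < 1 - x/y from by rw [sub_pos]; exact (div_lt_one hy0).2 hxy)
    (show (0:ℝ) < x/y from by positivity)
    (show (1 - x/y) + x/y = 1 from by ring)
  simp only [smul_eq_mul, mul_zero, Real.sin_zero, zero_add] at h
  rw [div_mul_cancel₀ x hy0.ne'] at h
  calc x * Real.sin y = y * (x/y * Real.sin y) := by field_simp
    _ < y * Real.sin x := mul_lt_mul_of_pos_left h hy0

lemma sin_mono_tri {a b : ℝ} (ha : 0 < a) (hab : a ≤ b) (hs : a + b < π) :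
    Real.sin a ≤ Real.sin b := by
  have ha2 : a ≤ π/2 := by linarith
  rcases le_total b (π/2) with hb | hb
  · exact Real.strictMonoOn_sin.monotoneOn ⟨by linarith, ha2⟩ ⟨by linarith, hb⟩ hab
  · rw [← Real.sin_pi_sub b]
    exact Real.strictMonoOn_sin.monotoneOn ⟨by linarith, ha2⟩ ⟨by linarith, by linarith⟩
      (by linarith)

lemma sin_min_pair {a b : ℝ} (ha : 0 < a) (hb : 0 < b) (hs : a + b < π) :
    Real.sin (min a b) = min (Real.sin a) (Real.sin b) := by
  rcases le_total a b with hab|hab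
  · rw [min_eq_left hab, min_eq_left (sin_mono_tri ha hab hs)]
  · rw [min_eq_right hab, min_eq_right (sin_mono_tri hb hab (by linarith))]

lemma sin_max_pair {a b : ℝ} (ha : 0 < a) (hb : 0 < b) (hs : a + b < π) :
    Real.sin (max a b) = max (Real.sin a) (Real.sin b) := by
  rcases le_total a b with hab|hab
  · rw [max_eq_right hab, max_eq_right (sin_mono_tri ha hab hs)]
  · rw [max_eq_left hab, max_eq_left (sin_mono_tri hb hab (by linarith))]

lemma sin_mn3 {a b c : ℝ} (ha : 0 < a) (hb : 0 < b) (hc : 0 < c) (h : a + b + c = π) :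
    Real.sin (min a (min b c)) = min (Real.sin a) (min (Real.sin b) (Real.sin c)) := by
  rw [← sin_min_pair hb hc (by linarith)]
  rcases le_total b c with hbc|hbc
  · rw [min_eq_left hbc, sin_min_pair ha hb (by linarith)]
  · rw [min_eq_right hbc, sin_min_pair ha hc (by linarith)]

lemma sin_mx3 {a b c : ℝ} (ha : 0 < a) (hb : 0 < b) (hc : 0 < c) (h : a + b + c = π) :
    Real.sin (max a (max b c)) = max (Real.sin a) (max (Real.sin b) (Real.sin c)) := by
  rw [← sin_max_pair hb hc (by linarith)]
  rcases le_total b c with hbc|hbc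
  · rw [max_eq_right hbc, sin_max_pair ha hc (by linarith)]
  · rw [max_eq_left hbc, sin_max_pair ha hb (by linarith)]

lemma mid_bounds (a b c : ℝ) :
    min a (min b c) ≤ a + b + c - min a (min b c) - max a (max b c) ∧
    a + b + c - min a (min b c) - max a (max b c) ≤ max a (max b c) := by
  rcases le_total a b with hab|hab <;> rcases le_total b c with hbc|hbc <;>
    rcases le_total a c with hac|hac <;>
    simp [min_def, max_def, hab, hbc, hac, *] <;>
    constructor <;> linarith

lemma sum_g (g : ℝ → ℝ) (a b c : ℝ) :
    g a + g b + g c =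
      g (min a (min b c)) + g (a + b + c - min a (min b c) - max a (max b c)) +
        g (max a (max b c)) := by
  rcases le_total a b with hab|hab <;> rcases le_total b c with hbc|hbc <;>
    rcases le_total a c with hac|hac <;>
    simp [min_def, max_def, hab, hbc, hac, *] <;>
    (try ring_nf) <;>
    · have h1 : b = a := by linarith
      have h2 : c = a := by linarith
      subst h1; subst h2; ring_nf

/-! ### Triangle predicate -/

def tri (q : ℝ × ℝ × ℝ) : Prop :=
  0 < q.1 ∧ 0 < q.2.1 ∧ 0 < q.2.2 ∧ q.1 + q.2.1 + q.2.2 = π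

noncomputable def Ssum (q : ℝ × ℝ × ℝ) : ℝ :=
  Real.sin q.1 + Real.sin q.2.1 + Real.sin q.2.2

noncomputable def mn (q : ℝ × ℝ × ℝ) : ℝ := min q.1 (min q.2.1 q.2.2)
noncomputable def mx (q : ℝ × ℝ × ℝ) : ℝ := max q.1 (max q.2.1 q.2.2)

lemma tri_lt_pi {q : ℝ × ℝ × ℝ} (h : tri q) :
    q.1 < π ∧ q.2.1 < π ∧ q.2.2 < π := by
  obtain ⟨h1, h2, h3, h4⟩ := h
  exact ⟨by linarith, by linarith, by linarith⟩

lemma sins_pos {q : ℝ × ℝ × ℝ} (h : tri q) :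
    0 < Real.sin q.1 ∧ 0 < Real.sin q.2.1 ∧ 0 < Real.sin q.2.2 := by
  obtain ⟨l1, l2, l3⟩ := tri_lt_pi h
  exact ⟨Real.sin_pos_of_pos_of_lt_pi h.1 l1,
    Real.sin_pos_of_pos_of_lt_pi h.2.1 l2,
    Real.sin_pos_of_pos_of_lt_pi h.2.2.1 l3⟩

lemma Ssum_pos {q : ℝ × ℝ × ℝ} (h : tri q) : 0 < Ssum q := by
  obtain ⟨s1, s2, s3⟩ := sins_pos h
  unfold Ssum; linarith

lemma tri_f {q : ℝ × ℝ × ℝ} (h : tri q) : tri (f q) := by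
  have hS : 0 < Ssum q := Ssum_pos h
  obtain ⟨s1, s2, s3⟩ := sins_pos h
  have hS' : Real.sin q.1 + Real.sin q.2.1 + Real.sin q.2.2 ≠ 0 := by
    unfold Ssum at hS; linarith
  refine ⟨?_, ?_, ?_, ?_⟩
  · show 0 < π * Real.sin q.1 / _
    have : (0:ℝ) < Real.sin q.1 + Real.sin q.2.1 + Real.sin q.2.2 := by linarith
    positivity
  · show 0 < π * Real.sin q.2.1 / _
    have : (0:ℝ) < Real.sin q.1 + Real.sin q.2.1 + Real.sin q.2.2 := by linarith
    positivity
  · show 0 < π * Real.sin q.2.2 / _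
    have : (0:ℝ) < Real.sin q.1 + Real.sin q.2.1 + Real.sin q.2.2 := by linarith
    positivity
  · show π * Real.sin q.1 / _ + π * Real.sin q.2.1 / _ + π * Real.sin q.2.2 / _ = π
    field_simp

lemma phi_mono {q : ℝ × ℝ × ℝ} (h : tri q) :
    Monotone (fun t : ℝ => π * t / Ssum q) := by
  intro u v huv
  have hS := Ssum_pos h
  have hπ := pi_pos
  dsimp only
  gcongr

lemma mn_f {q : ℝ × ℝ × ℝ} (h : tri q) :
    mn (f q) = π * Real.sin (mn q) / Ssum q := by
  obtain ⟨h1, h2, h3, h4⟩ := h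
  show min (π * Real.sin q.1 / Ssum q)
      (min (π * Real.sin q.2.1 / Ssum q) (π * Real.sin q.2.2 / Ssum q)) = _
  rw [← (phi_mono ⟨h1, h2, h3, h4⟩).map_min, ← (phi_mono ⟨h1, h2, h3, h4⟩).map_min,
    ← sin_mn3 h1 h2 h3 h4]
  rfl

lemma mx_f {q : ℝ × ℝ × ℝ} (h : tri q) :
    mx (f q) = π * Real.sin (mx q) / Ssum q := by
  obtain ⟨h1, h2, h3, h4⟩ := h
  show max (π * Real.sin q.1 / Ssum q)
      (max (π * Real.sin q.2.1 / Ssum q) (π * Real.sin q.2.2 / Ssum q)) = _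
  rw [← (phi_mono ⟨h1, h2, h3, h4⟩).map_max, ← (phi_mono ⟨h1, h2, h3, h4⟩).map_max,
    ← sin_mx3 h1 h2 h3 h4]
  rfl

lemma mn_pos {q : ℝ × ℝ × ℝ} (h : tri q) : 0 < mn q :=
  lt_min h.1 (lt_min h.2.1 h.2.2.1)

lemma mx_lt_pi {q : ℝ × ℝ × ℝ} (h : tri q) : mx q < π := by
  obtain ⟨l1, l2, l3⟩ := tri_lt_pi h
  exact max_lt l1 (max_lt l2 l3)

lemma mn_le_one {q : ℝ × ℝ × ℝ} : mn q ≤ q.1 := min_le_left _ _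
lemma mn_le_two {q : ℝ × ℝ × ℝ} : mn q ≤ q.2.1 :=
  (min_le_right _ _).trans (min_le_left _ _)
lemma mn_le_three {q : ℝ × ℝ × ℝ} : mn q ≤ q.2.2 :=
  (min_le_right _ _).trans (min_le_right _ _)
lemma one_le_mx {q : ℝ × ℝ × ℝ} : q.1 ≤ mx q := le_max_left _ _
lemma two_le_mx {q : ℝ × ℝ × ℝ} : q.2.1 ≤ mx q :=
  (le_max_left _ _).trans (le_max_right _ _)
lemma three_le_mx {q : ℝ × ℝ × ℝ} : q.2.2 ≤ mx q :=
  (le_max_right _ _).trans (le_max_right _ _)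

lemma mn_step {q : ℝ × ℝ × ℝ} (h : tri q) : mn q ≤ mn (f q) := by
  have hS := Ssum_pos h
  rw [mn_f h, le_div_iff₀ hS]
  have l := tri_lt_pi h
  have hm := mn_pos h
  have c1 := chord hm mn_le_one l.1.le
  have c2 := chord hm mn_le_two l.2.1.le
  have c3 := chord hm mn_le_three l.2.2.le
  have e : π * Real.sin (mn q) =
      q.1 * Real.sin (mn q) + q.2.1 * Real.sin (mn q) + q.2.2 * Real.sin (mn q) := by
    rw [← h.2.2.2]; ring
  have e2 : mn q * Ssum q =
      mn q * Real.sin q.1 + mn q * Real.sin q.2.1 + mn q * Real.sin q.2.2 := by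
    unfold Ssum; ring
  linarith

lemma mx_step {q : ℝ × ℝ × ℝ} (h : tri q) : mx (f q) ≤ mx q := by
  have hS := Ssum_pos h
  rw [mx_f h, div_le_iff₀ hS]
  have hmx := (mx_lt_pi h).le
  have c1 := chord h.1 one_le_mx hmx
  have c2 := chord h.2.1 two_le_mx hmx
  have c3 := chord h.2.2.1 three_le_mx hmx
  have e : π * Real.sin (mx q) =
      q.1 * Real.sin (mx q) + q.2.1 * Real.sin (mx q) + q.2.2 * Real.sin (mx q) := by
    rw [← h.2.2.2]; ring
  have e2 : mx q * Ssum q =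
      mx q * Real.sin q.1 + mx q * Real.sin q.2.1 + mx q * Real.sin q.2.2 := by
    unfold Ssum; ring
  linarith

/-! ### Main theorem -/

theorem stmt_10 (p : ℝ × ℝ × ℝ) (h1 : 0 < p.1) (h2 : 0 < p.2.1) (h3 : 0 < p.2.2)
    (hsum : p.1 + p.2.1 + p.2.2 = π) :
    Filter.Tendsto (fun n => f^[n] p) Filter.atTop (nhds (π / 3, π / 3, π / 3)) := by
  set q : ℕ → ℝ × ℝ × ℝ := fun n => f^[n] p with hqdef
  have hq : ∀ n, q (n+1) = f (q n) := fun n => Function.iterate_succ_apply' f n p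
  have hT : ∀ n, tri (q n) := by
    intro n
    induction n with
    | zero => exact ⟨h1, h2, h3, hsum⟩
    | succ n ih => rw [hq]; exact tri_f ih
  set m : ℕ → ℝ := fun n => mn (q n) with hmdef
  set M : ℕ → ℝ := fun n => mx (q n) with hMdef
  have hmM : ∀ n, m n ≤ M n := fun n => mn_le_one.trans one_le_mx
  have hmono : Monotone m :=
    monotone_nat_of_le_succ fun n => by rw [hmdef]; dsimp only; rw [hq]; exact mn_step (hT n)
  have hanti : Antitone M :=
    antitone_nat_of_succ_le fun n => by rw [hMdef]; dsimp only; rw [hq]; exact mx_step (hT n)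
  have hm_lt_pi : ∀ n, m n ≤ π := fun n => ((hmM n).trans (mx_lt_pi (hT n)).le)
  have hM_ge : ∀ n, (0:ℝ) ≤ M n := fun n => ((mn_pos (hT n)).le.trans (hmM n))
  have hbddA : BddAbove (Set.range m) := ⟨π, by rintro _ ⟨n, rfl⟩; exact hm_lt_pi n⟩
  have hbddB : BddBelow (Set.range M) := ⟨0, by rintro _ ⟨n, rfl⟩; exact hM_ge n⟩
  set a : ℝ := ⨆ n, m n with hadef
  set b : ℝ := ⨅ n, M n with hbdef
  have hma : Filter.Tendsto m Filter.atTop (nhds a) := tendsto_atTop_ciSup hmono hbddA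
  have hMb : Filter.Tendsto M Filter.atTop (nhds b) := tendsto_atTop_ciInf hanti hbddB
  have ha_pos : 0 < a := lt_of_lt_of_le (mn_pos (hT 0)) (le_ciSup hbddA 0)
  have hb_lt : b < π := lt_of_le_of_lt (ciInf_le hbddB 0) (mx_lt_pi (hT 0))
  have hab : a ≤ b := le_of_tendsto_of_tendsto' hma hMb hmM
  set L : ℝ := Real.sin a + Real.sin (π - a - b) + Real.sin b with hLdef
  -- Ssum in terms of m and M
  have hSsum : ∀ n, Ssum (q n) = Real.sin (m n) + Real.sin (π - m n - M n) + Real.sin (M n) := by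
    intro n
    have := sum_g Real.sin (q n).1 (q n).2.1 (q n).2.2
    rw [(hT n).2.2.2] at this
    exact this
  have hSt : Filter.Tendsto (fun n => Ssum (q n)) Filter.atTop (nhds L) := by
    rw [hLdef]
    have t1 : Filter.Tendsto (fun n => Real.sin (m n)) Filter.atTop (nhds (Real.sin a)) :=
      (Real.continuous_sin.tendsto a).comp hma
    have t3 : Filter.Tendsto (fun n => Real.sin (M n)) Filter.atTop (nhds (Real.sin b)) :=
      (Real.continuous_sin.tendsto b).comp hMb
    have t2 : Filter.Tendsto (fun n => Real.sin (π - m n - M n)) Filter.atTop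
        (nhds (Real.sin (π - a - b))) :=
      (Real.continuous_sin.tendsto _).comp ((tendsto_const_nhds.sub hma).sub hMb)
    simpa only [hSsum] using (t1.add t2).add t3
  have heqm : ∀ n, m (n+1) * Ssum (q n) = π * Real.sin (m n) := by
    intro n
    have hS := (Ssum_pos (hT n)).ne'
    show mn (q (n+1)) * Ssum (q n) = _
    rw [hq, mn_f (hT n), div_mul_cancel₀ _ hS]
  have heqM : ∀ n, M (n+1) * Ssum (q n) = π * Real.sin (M n) := by
    intro n
    have hS := (Ssum_pos (hT n)).ne'
    show mx (q (n+1)) * Ssum (q n) = _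
    rw [hq, mx_f (hT n), div_mul_cancel₀ _ hS]
  have hshift : Filter.Tendsto (fun n => m (n+1)) Filter.atTop (nhds a) :=
    hma.comp (Filter.tendsto_add_atTop_nat 1)
  have hshiftM : Filter.Tendsto (fun n => M (n+1)) Filter.atTop (nhds b) :=
    hMb.comp (Filter.tendsto_add_atTop_nat 1)
  have hA : a * L = π * Real.sin a := by
    refine tendsto_nhds_unique (f := fun n => m (n+1) * Ssum (q n)) (hshift.mul hSt) ?_
    simp only [heqm]
    exact tendsto_const_nhds.mul ((Real.continuous_sin.tendsto a).comp hma)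
  have hB : b * L = π * Real.sin b := by
    refine tendsto_nhds_unique (f := fun n => M (n+1) * Ssum (q n)) (hshiftM.mul hSt) ?_
    simp only [heqM]
    exact tendsto_const_nhds.mul ((Real.continuous_sin.tendsto b).comp hMb)
  have ha_lt : a < π := lt_of_le_of_lt hab hb_lt
  have hsa : 0 < Real.sin a := Real.sin_pos_of_pos_of_lt_pi ha_pos ha_lt
  have hL_pos : 0 < L := by
    have h0 : 0 < a * L := by rw [hA]; exact mul_pos pi_pos hsa
    nlinarith [h0, ha_pos]
  have hab_eq : a = b := by
    rcases eq_or_lt_of_le hab with h | h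
    · exact h
    · exfalso
      have hc := chord_strict ha_pos h hb_lt.le
      nlinarith [hA, hB, hL_pos, pi_pos]
  -- middle angle limit
  have hmid : ∀ n, m n ≤ π - m n - M n ∧ π - m n - M n ≤ M n := by
    intro n
    have := mid_bounds (q n).1 (q n).2.1 (q n).2.2
    rw [(hT n).2.2.2] at this
    exact this
  have hmidt : Filter.Tendsto (fun n => π - m n - M n) Filter.atTop (nhds (π - a - b)) :=
    (tendsto_const_nhds.sub hma).sub hMb
  have hle1 : a ≤ π - a - b := le_of_tendsto_of_tendsto' hma hmidt fun n => (hmid n).1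
  have hle2 : π - a - b ≤ b := le_of_tendsto_of_tendsto' hmidt hMb fun n => (hmid n).2
  have ha3 : a = π / 3 := by rw [hab_eq] at hle1 hle2 ⊢; linarith
  have hb3 : b = π / 3 := by rw [← hab_eq]; exact ha3
  rw [ha3] at hma
  rw [hb3] at hMb
  have t1 : Filter.Tendsto (fun n => (q n).1) Filter.atTop (nhds (π/3)) :=
    tendsto_of_tendsto_of_tendsto_of_le_of_le hma hMb
      (fun n => mn_le_one) (fun n => one_le_mx)
  have t2 : Filter.Tendsto (fun n => (q n).2.1) Filter.atTop (nhds (π/3)) :=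
    tendsto_of_tendsto_of_tendsto_of_le_of_le hma hMb
      (fun n => mn_le_two) (fun n => two_le_mx)
  have t3 : Filter.Tendsto (fun n => (q n).2.2) Filter.atTop (nhds (π/3)) :=
    tendsto_of_tendsto_of_tendsto_of_le_of_le hma hMb
      (fun n => mn_le_three) (fun n => three_le_mx)
  exact t1.prodMk_nhds (t2.prodMk_nhds t3)
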